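/- Let q ≥ 3 be a prime, w = e^{2πi/q}, let F_q = (w^{ij})_{i,j∈ℤ/qℤ} be the Fourier matrix, and let D ∈ M_q(ℂ) be the diagonal matrix with D_{cc} = w^{c(c−1)/2} for c ∈ ℤ/qℤ (the exponent c(c−1)/2 computed in ℤ/qℤ, where division by 2 is inversion of 2 modulo q). Then for every integer k with k ≢ 0 (mod q), every entry of the matrix (1/√q)·F_q*·D^k·F_q has modulus 1; consequently (1/√q)·F_q*·D^k·F_q, being √q times a unitary matrix with unit-modulus entries, is a complex Hadamard matrix. Equivalently, setting E_i = D^i·F_q for 0 ≤ i ≤ q−1, the matrix (1/√q)·E_i*·E_j is complex Hadamard for all i ≠ j. -/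

import Mathlib

/-!
For a primitive additive character `ψ` of `𝔽_q`, the entry `(a, b)` of `F_q* · D^k · F_q` is the
quadratic Gauss sum `∑ c, ψ (k c (c - 1) / 2 + c (b - a))`. For a quadratic `f` with leading
coefficient `k / 2 ≠ 0` the difference `f (y + s) - f y - f s` is linear and nonconstant in `y`
unless `s = 0`; so writing `|∑ x, ψ (f x)|² = ∑ s, ψ (f s) ∑ y, ψ (f (y + s) - f y - f s)` only
`s = 0` survives and the modulus is `√q`. Orthogonality of the rows needs no arithmetic:
`F_q / √q` is unitary and `D^k` is a unitary diagonal, so `F_q* D^k F_q / q` is unitary.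
For `E_i* E_j` the same applies with `(D^i)* D^j = D^(j - i)`.
-/

open Matrix Finset

theorem AddChar.star_apply {G : Type*} [AddCommGroup G] [Finite G] (ψ : AddChar G ℂ) (x : G) :
    star (ψ x) = ψ (-x) :=
  (ψ.map_neg_eq_conj x).symm

theorem AddChar.norm_sum_quadratic {F : Type*} [Field F] [Fintype F] {ψ : AddChar F ℂ}
    (hψ : ψ.IsPrimitive) (h2 : (2 : F) ≠ 0) {α : F} (hα : α ≠ 0) (β : F) :
    ‖∑ x, ψ (α * x ^ 2 + β * x)‖ = √(Fintype.card F) := by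
  classical
  set f : F → F := fun x => α * x ^ 2 + β * x
  have hdiff : ∀ y s, f (y + s) - f y = y * (2 * α * s) + f s := fun y s => by
    simp only [f]; ring
  have hsq : ((‖∑ x, ψ (f x)‖ ^ 2 : ℝ) : ℂ) = Fintype.card F :=
    calc ((‖∑ x, ψ (f x)‖ ^ 2 : ℝ) : ℂ)
        = ∑ y, ∑ x, ψ (f x - f y) := by
          rw [Complex.ofReal_pow, ← Complex.mul_conj', map_sum, sum_mul_sum, sum_comm]
          simp only [sub_eq_add_neg, AddChar.map_add_eq_mul, AddChar.map_neg_eq_conj]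
      _ = ∑ y, ∑ s, ψ (f (y + s) - f y) := by
          refine sum_congr rfl fun y _ => ?_
          exact (Fintype.sum_equiv (Equiv.addLeft y) _ _ fun s => rfl).symm
      _ = ∑ s, ψ (f s) * ∑ y, ψ (y * (2 * α * s)) := by
          simp only [hdiff, AddChar.map_add_eq_mul, mul_sum]
          rw [sum_comm]
          exact sum_congr rfl fun _ _ => sum_congr rfl fun _ _ => mul_comm _ _
      _ = Fintype.card F := by
          simp [AddChar.sum_mulShift _ hψ, h2, hα, f]
  rw [← Real.sqrt_sq (norm_nonneg _)]
  congr 1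
  exact_mod_cast hsq

theorem conjTranspose_diagonal_addChar_mul {n G : Type*} [Fintype n] [DecidableEq n]
    [AddCommGroup G] [Finite G] (ψ : AddChar G ℂ) (f g : n → G) :
    (diagonal fun c => ψ (f c))ᴴ * diagonal (fun c => ψ (g c)) =
      diagonal fun c => ψ (g c - f c) := by
  rw [diagonal_conjTranspose, diagonal_mul_diagonal]
  congr 1
  funext c
  rw [Pi.star_apply, AddChar.star_apply, ← AddChar.map_add_eq_mul, neg_add_eq_sub]

section Hadamard

variable {n : Type*} [Fintype n] [DecidableEq n]

def IsComplexHadamard (H : Matrix n n ℂ) : Prop :=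
  (∀ a b, ‖H a b‖ = 1) ∧ H * Hᴴ = (Fintype.card n : ℂ) • 1

theorem IsComplexHadamard.sum_mul_star {H : Matrix n n ℂ} (hH : IsComplexHadamard H) (a c : n) :
    ∑ b, H a b * star (H c b) = if a = c then (Fintype.card n : ℂ) else 0 := by
  have := congrFun (congrFun hH.2 a) c
  simpa [Matrix.mul_apply, Matrix.one_apply] using this

theorem isComplexHadamard_inv_sqrt_smul [Nonempty n] {A : Matrix n n ℂ}
    (hnorm : ∀ a b, ‖A a b‖ = √(Fintype.card n))
    (horth : A * Aᴴ = ((Fintype.card n : ℂ) * Fintype.card n) • 1) :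
    IsComplexHadamard (((√(Fintype.card n) : ℝ)⁻¹ : ℂ) • A) := by
  have hN : (0 : ℝ) < Fintype.card n := by exact_mod_cast Fintype.card_pos
  have hs : ((√(Fintype.card n) : ℝ)⁻¹ : ℂ) * star ((√(Fintype.card n) : ℝ)⁻¹ : ℂ) =
      (Fintype.card n : ℂ)⁻¹ := by
    rw [star_inv₀, Complex.star_def, Complex.conj_ofReal, ← mul_inv, ← Complex.ofReal_mul,
      Real.mul_self_sqrt hN.le, Complex.ofReal_natCast]
  refine ⟨fun a b => ?_, ?_⟩
  · rw [Matrix.smul_apply, smul_eq_mul, norm_mul, hnorm, norm_inv, Complex.norm_real,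
      Real.norm_eq_abs, abs_of_nonneg (Real.sqrt_nonneg _),
      inv_mul_cancel₀ (Real.sqrt_pos.2 hN).ne']
  · rw [conjTranspose_smul, smul_mul_smul_comm, horth, smul_smul, hs, ← mul_assoc,
      inv_mul_cancel₀ (by exact_mod_cast hN.ne'), one_mul]

end Hadamard

theorem conjTranspose_mul_mul_mul_conjTranspose {n R : Type*} [Fintype n] [DecidableEq n]
    [CommSemiring R] [StarRing R] {F U : Matrix n n R} {c : R}
    (hF : F * Fᴴ = c • 1) (hF' : Fᴴ * F = c • 1) (hU : U * Uᴴ = 1) :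
    (Fᴴ * U * F) * (Fᴴ * U * F)ᴴ = (c * c) • 1 := by
  calc (Fᴴ * U * F) * (Fᴴ * U * F)ᴴ = Fᴴ * U * (F * Fᴴ) * Uᴴ * F := by
        simp only [conjTranspose_mul, conjTranspose_conjTranspose, Matrix.mul_assoc]
    _ = c • (Fᴴ * (U * Uᴴ) * F) := by
        rw [hF]; simp only [Matrix.mul_smul, Matrix.smul_mul, Matrix.mul_one, Matrix.mul_assoc]
    _ = (c * c) • 1 := by rw [hU, Matrix.mul_one, hF', smul_smul]

section Fourier

variable {R : Type*} [CommRing R] [Fintype R] [DecidableEq R]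

def fourierMatrix (ψ : AddChar R ℂ) : Matrix R R ℂ := Matrix.of fun i j => ψ (i * j)

variable {ψ : AddChar R ℂ}

theorem fourierMatrix_mul_conjTranspose (hψ : ψ.IsPrimitive) :
    fourierMatrix ψ * (fourierMatrix ψ)ᴴ = (Fintype.card R : ℂ) • 1 := by
  ext i k
  have : ∀ j, ψ (i * j) * star (ψ (k * j)) = ψ (j * (i - k)) := fun j => by
    rw [AddChar.star_apply, ← AddChar.map_add_eq_mul]; ring_nf
  simp only [Matrix.mul_apply, conjTranspose_apply, fourierMatrix, of_apply, this,
    AddChar.sum_mulShift _ hψ, sub_eq_zero]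
  simp [Matrix.one_apply]

theorem conjTranspose_mul_fourierMatrix (hψ : ψ.IsPrimitive) :
    (fourierMatrix ψ)ᴴ * fourierMatrix ψ = (Fintype.card R : ℂ) • 1 := by
  ext i k
  have : ∀ j, star (ψ (j * i)) * ψ (j * k) = ψ (j * (k - i)) := fun j => by
    rw [AddChar.star_apply, ← AddChar.map_add_eq_mul]; ring_nf
  simp only [Matrix.mul_apply, conjTranspose_apply, fourierMatrix, of_apply, this,
    AddChar.sum_mulShift _ hψ, sub_eq_zero]
  simp [Matrix.one_apply, eq_comm]

theorem conjTranspose_fourierMatrix_mul_diagonal_mul_apply (f : R → R) (a b : R) :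
    ((fourierMatrix ψ)ᴴ * diagonal (fun c => ψ (f c)) * fourierMatrix ψ) a b =
      ∑ c, ψ (f c + c * (b - a)) := by
  refine sum_congr rfl fun c _ => ?_
  simp only [mul_diagonal, conjTranspose_apply, fourierMatrix, of_apply, AddChar.star_apply,
    ← AddChar.map_add_eq_mul]
  ring_nf

end Fourier

theorem isComplexHadamard_fourierMatrix_quadratic {F : Type*} [Field F] [Fintype F]
    [DecidableEq F] {ψ : AddChar F ℂ} (hψ : ψ.IsPrimitive) (h2 : (2 : F) ≠ 0)
    {α : F} (hα : α ≠ 0) (β : F) :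
    IsComplexHadamard (((√(Fintype.card F) : ℝ)⁻¹ : ℂ) •
      ((fourierMatrix ψ)ᴴ * diagonal (fun c => ψ (α * c ^ 2 + β * c)) * fourierMatrix ψ)) := by
  refine isComplexHadamard_inv_sqrt_smul (fun a b => ?_) ?_
  · rw [conjTranspose_fourierMatrix_mul_diagonal_mul_apply]
    simp_rw [show ∀ c, α * c ^ 2 + β * c + c * (b - a) = α * c ^ 2 + (β + b - a) * c from
      fun c => by ring]
    exact AddChar.norm_sum_quadratic hψ h2 hα _
  · refine conjTranspose_mul_mul_mul_conjTranspose (fourierMatrix_mul_conjTranspose hψ)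
      (conjTranspose_mul_fourierMatrix hψ) (mul_eq_one_comm.1 ?_)
    rw [conjTranspose_diagonal_addChar_mul]
    simp

theorem ZMod.exp_pow_val_eq_stdAddChar {N : ℕ} [NeZero N] (x : ZMod N) :
    Complex.exp (2 * Real.pi * Complex.I / N) ^ x.val = ZMod.stdAddChar x := by
  rw [ZMod.stdAddChar_apply, ZMod.toCircle_apply, ← Complex.exp_nat_mul]
  ring_nf

theorem ZMod.isComplexHadamard_fourierMatrix_chirp {q : ℕ} [Fact q.Prime] (h2 : (2 : ZMod q) ≠ 0)
    {m : ZMod q} (hm : m ≠ 0) :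
    IsComplexHadamard (((√q : ℝ)⁻¹ : ℂ) • ((fourierMatrix ZMod.stdAddChar)ᴴ *
      diagonal (fun c => ZMod.stdAddChar (m * (c * (c - 1) * 2⁻¹))) *
        fourierMatrix ZMod.stdAddChar)) := by
  have hquad : ∀ c : ZMod q, m * (c * (c - 1) * 2⁻¹) = m * 2⁻¹ * c ^ 2 + -(m * 2⁻¹) * c :=
    fun c => by ring
  simpa only [hquad, ZMod.card] using isComplexHadamard_fourierMatrix_quadratic
    (ZMod.isPrimitive_stdAddChar q) h2 (mul_ne_zero hm (inv_ne_zero h2)) (-(m * 2⁻¹))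

/-- for a prime `q ≥ 3`, `w = e^{2πi/q}`, `F_q = (w^{ij})`, and
`D = diag(w^{c(c−1)/2})`, every entry of `(1/√q)·F_q*·D^k·F_q` has modulus 1 for `q ∤ k`,
and this matrix is complex Hadamard; equivalently, with `E_i = D^i·F_q`, the matrix
`(1/√q)·E_i*·E_j` is complex Hadamard for all `i ≠ j`. -/
theorem stmt_15 (q : ℕ) [Fact (Nat.Prime q)] (hq3 : 3 ≤ q)
    (w : ℂ) (hw : w = Complex.exp (2 * Real.pi * Complex.I / q))
    (F : Matrix (ZMod q) (ZMod q) ℂ) (hF : ∀ i j : ZMod q, F i j = w ^ (i * j).val)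
    (D : Matrix (ZMod q) (ZMod q) ℂ)
    (hD : D = Matrix.diagonal fun c : ZMod q => w ^ (c * (c - 1) * (2 : ZMod q)⁻¹).val) :
    (∀ k : ℕ, ¬ (q ∣ k) →
      (∀ a b : ZMod q,
        ‖(((Real.sqrt q)⁻¹ : ℂ) • (Fᴴ * D ^ k * F)) a b‖ = 1) ∧
      (∀ a c : ZMod q,
        ∑ b : ZMod q,
          (((Real.sqrt q)⁻¹ : ℂ) • (Fᴴ * D ^ k * F)) a b *
            star ((((Real.sqrt q)⁻¹ : ℂ) • (Fᴴ * D ^ k * F)) c b) =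
          if a = c then (q : ℂ) else 0)) ∧
    (∀ i j : ℕ, i < q → j < q → i ≠ j →
      (∀ a b : ZMod q,
        ‖(((Real.sqrt q)⁻¹ : ℂ) • ((D ^ i * F)ᴴ * (D ^ j * F))) a b‖ = 1) ∧
      (∀ a c : ZMod q,
        ∑ b : ZMod q,
          (((Real.sqrt q)⁻¹ : ℂ) • ((D ^ i * F)ᴴ * (D ^ j * F))) a b *
            star ((((Real.sqrt q)⁻¹ : ℂ) • ((D ^ i * F)ᴴ * (D ^ j * F))) c b) =
          if a = c then (q : ℂ) else 0)) := by
  have h2 : (2 : ZMod q) ≠ 0 := by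
    intro h
    have := Nat.le_of_dvd two_pos ((ZMod.natCast_eq_zero_iff 2 q).1 (by exact_mod_cast h))
    omega
  have hFψ : F = fourierMatrix ZMod.stdAddChar := by
    ext i j
    rw [hF, hw, ZMod.exp_pow_val_eq_stdAddChar]
    rfl
  have hDpow (k : ℕ) :
      D ^ k = diagonal fun c => ZMod.stdAddChar ((k : ZMod q) * (c * (c - 1) * 2⁻¹)) := by
    rw [hD, diagonal_pow]
    congr 1
    funext c
    rw [Pi.pow_apply, hw, ZMod.exp_pow_val_eq_stdAddChar, ← AddChar.map_nsmul_eq_pow, nsmul_eq_mul]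
  have unfold_hadamard (H : Matrix (ZMod q) (ZMod q) ℂ) (hH : IsComplexHadamard H) :
      (∀ a b, ‖H a b‖ = 1) ∧ ∀ a c, ∑ b, H a b * star (H c b) = if a = c then (q : ℂ) else 0 :=
    ⟨hH.1, fun a c => by rw [hH.sum_mul_star, ZMod.card]⟩
  subst hFψ
  refine ⟨fun k hk => ?_, fun i j hi hj hij => ?_⟩
  · rw [hDpow]
    exact unfold_hadamard _ <|
      ZMod.isComplexHadamard_fourierMatrix_chirp h2 ((ZMod.natCast_eq_zero_iff k q).not.2 hk)
  · have hji : (j : ZMod q) - i ≠ 0 := by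
      rw [sub_ne_zero, Ne, ZMod.natCast_eq_natCast_iff', Nat.mod_eq_of_lt hi, Nat.mod_eq_of_lt hj]
      exact Ne.symm hij
    rw [conjTranspose_mul, Matrix.mul_assoc, ← Matrix.mul_assoc (D ^ i)ᴴ, hDpow, hDpow,
      conjTranspose_diagonal_addChar_mul, ← Matrix.mul_assoc]
    simp_rw [← sub_mul]
    exact unfold_hadamard _ (ZMod.isComplexHadamard_fourierMatrix_chirp h2 hji)
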